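/- Let G be a finite simple graph whose edge set carries a linear order, let e be the minimum edge of G, and let k ≥ 1 be a natural number. Then the number of (k−1)-element subsets of the edge set of the contracted graph G|_e that include no broken circuit of G|_e equals the number of k-element subsets of the edge set of G that contain e and include no broken circuit of G; moreover, the map X ↦ X \ {e} is a bijection between the latter family and the former. -/

import Mathlib

attribute [-instance] Sym2.instPartialOrder

open SimpleGraph

/-- `B` is a broken circuit of the simple graph `G` (whose edges are compared via the
linear order on `Sym2 V`): `B` is obtained from the edge set of a cycle of `G` by
removing its maximum edge. -/
def IsBrokenCircuit {V : Type*} [LinearOrder (Sym2 V)] (G : SimpleGraph V)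
    (B : Set (Sym2 V)) : Prop :=
  ∃ (u : V) (w : G.Walk u u), w.IsCycle ∧
    ∃ fm ∈ w.edges, (∀ g ∈ w.edges, g ≤ fm) ∧ B = {g | g ∈ w.edges} \ {fm}

/-- `{e, f, h}` is the edge set of a triangle in `G`. -/
def IsTriangleEdges {V : Type*} (G : SimpleGraph V) (e f h : Sym2 V) : Prop :=
  ∃ x y z : V, G.Adj x y ∧ G.Adj y z ∧ G.Adj z x ∧
    e = s(x, y) ∧ f = s(y, z) ∧ h = s(z, x)

/-- The vertex map contracting the edge `s(a, b)`: it identifies `b` with `a`. -/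
def contractMap {V : Type*} [DecidableEq V] (a b : V) : V → V :=
  fun v => if v = b then a else v

/-- The simple graph obtained from `G` by contracting the edge `s(a, b)`
(identifying `b` with `a`); parallel edges arising from the contraction are merged. -/
def contractGraph {V : Type*} [DecidableEq V] (G : SimpleGraph V) (a b : V) :
    SimpleGraph V where
  Adj x y := x ≠ y ∧ ∃ f ∈ G.edgeSet, f ≠ s(a, b) ∧
    Sym2.map (contractMap a b) f = s(x, y)
  symm := ⟨by
    rintro x y ⟨hxy, f, hf, hfe, hmap⟩
    exact ⟨hxy.symm, f, hf, hfe, by rw [hmap, Sym2.eq_swap]⟩⟩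
  loopless := ⟨by rintro x ⟨h, -⟩; exact h rfl⟩

/-- `f` belongs to the edge set of `G|ₑ` (for `e = s(a, b)`), viewed as a subset of
the edge set of `G`: `f` is an edge of `G` other than `e` and there is no edge `h > f`
such that `{e, f, h}` is the edge set of a triangle in `G` (i.e. `f` is the maximum
edge in its parallel class after contraction of `e`). -/
def IsContractEdge {V : Type*} [LinearOrder (Sym2 V)] (G : SimpleGraph V)
    (e f : Sym2 V) : Prop :=
  f ∈ G.edgeSet ∧ f ≠ e ∧ ∀ h : Sym2 V, f < h → ¬ IsTriangleEdges G e f h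

/-- `B` is a broken circuit of the contraction `G|ₑ` (with `e = s(a, b)`), expressed
via the identification of the edge set of `G|ₑ` with a subset of the edge set of `G`:
there is a cycle `w` of the contracted simple graph such that, with
`S ⊆ E(G)` the set of representatives of the edges of `w`, `B = S \ {max S}`. -/
def IsContractBrokenCircuit {V : Type*} [DecidableEq V] [LinearOrder (Sym2 V)]
    (G : SimpleGraph V) (a b : V) (B : Set (Sym2 V)) : Prop :=
  ∃ (u : V) (w : (contractGraph G a b).Walk u u), w.IsCycle ∧
    ∃ S : Set (Sym2 V),
      (∀ f, f ∈ S ↔ IsContractEdge G s(a, b) f ∧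
        Sym2.map (contractMap a b) f ∈ w.edges) ∧
      ∃ fm ∈ S, (∀ g ∈ S, g ≤ fm) ∧ B = S \ {fm}

namespace ContractionBC

variable {V : Type*} [DecidableEq V] [LinearOrder (Sym2 V)] {G : SimpleGraph V} {a b : V}

set_option linter.unusedSectionVars false

lemma cm_of_ne {v : V} (h : v ≠ b) : contractMap a b v = v := if_neg h

lemma cm_b : contractMap a b b = a := if_pos rfl

lemma cm_ne_b (hab : a ≠ b) (v : V) : contractMap a b v ≠ b := by
  unfold contractMap; split_ifs with h
  · exact hab
  · exact h

lemma cm_eq_a_iff (hab : a ≠ b) {v : V} : contractMap a b v = a ↔ v = a ∨ v = b := by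
  unfold contractMap; split_ifs with h
  · simp [h]
  · constructor
    · exact fun hv => Or.inl hv
    · rintro (rfl | rfl)
      · rfl
      · exact absurd rfl h

lemma cm_inj_cases (hab : a ≠ b) {x y : V} (h : contractMap a b x = contractMap a b y) :
    x = y ∨ (x = a ∧ y = b) ∨ (x = b ∧ y = a) := by
  unfold contractMap at h
  split_ifs at h with h1 h2 h2
  · exact Or.inl (h1.trans h2.symm)
  · exact Or.inr (Or.inr ⟨h1, h.symm⟩)
  · exact Or.inr (Or.inl ⟨h, h2⟩)
  · exact Or.inl h

lemma cm_preimage_of_ne_a {w t : V} (h : contractMap a b w = t) (ht : t ≠ a) : w = t := by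
  unfold contractMap at h
  split_ifs at h with h1
  · exact absurd h.symm ht
  · exact h

lemma sym2_map_eq {f : Sym2 V} {x z : V} (h : Sym2.map (contractMap a b) f = s(x, z)) :
    ∃ u v, f = s(u, v) ∧ contractMap a b u = x ∧ contractMap a b v = z := by
  induction f using Sym2.ind with
  | _ u v =>
    rw [Sym2.map_pair_eq, Sym2.eq_iff] at h
    rcases h with ⟨h1, h2⟩ | ⟨h1, h2⟩
    · exact ⟨u, v, rfl, h1, h2⟩
    · exact ⟨v, u, Sym2.eq_swap, h2, h1⟩

lemma sym2_ne_ab {y z : V} (hza : z ≠ a) (hzb : z ≠ b) : s(y, z) ≠ s(a, b) := by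
  intro hcon
  rw [Sym2.eq_iff] at hcon
  rcases hcon with ⟨-, h⟩ | ⟨-, h⟩
  · exact hzb h
  · exact hza h

lemma img_eq_cases_aligned (hab : a ≠ b) {u v u' v' : V} (hf : G.Adj u v) (hh : G.Adj u' v')
    (hfe : s(u, v) ≠ s(a, b)) (hne : s(u, v) ≠ s(u', v'))
    (h1 : contractMap a b u = contractMap a b u') (h2 : contractMap a b v = contractMap a b v') :
    ∃ z, z ≠ a ∧ z ≠ b ∧ ((s(u, v) = s(a, z) ∧ s(u', v') = s(b, z)) ∨
      (s(u, v) = s(b, z) ∧ s(u', v') = s(a, z))) := by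
  rcases cm_inj_cases hab h1 with rfl | ⟨rfl, rfl⟩ | ⟨rfl, rfl⟩ <;>
    rcases cm_inj_cases hab h2 with rfl | ⟨rfl, rfl⟩ | ⟨rfl, rfl⟩
  · exact absurd rfl hne
  · exact ⟨u, hf.ne, hh.ne, Or.inl ⟨Sym2.eq_swap, Sym2.eq_swap⟩⟩
  · exact ⟨u, hh.ne, hf.ne, Or.inr ⟨Sym2.eq_swap, Sym2.eq_swap⟩⟩
  · exact ⟨v, hf.ne', hh.ne', Or.inl ⟨rfl, rfl⟩⟩
  · exact absurd hf (G.loopless.irrefl _)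
  · exact absurd rfl hfe
  · exact ⟨v, hh.ne', hf.ne', Or.inr ⟨rfl, rfl⟩⟩
  · exact absurd Sym2.eq_swap hfe
  · exact absurd hf (G.loopless.irrefl _)

lemma img_eq_cases (hab : a ≠ b) {f h : Sym2 V} (hf : f ∈ G.edgeSet) (hh : h ∈ G.edgeSet)
    (hfe : f ≠ s(a, b)) (hne : f ≠ h)
    (him : Sym2.map (contractMap a b) f = Sym2.map (contractMap a b) h) :
    ∃ z, z ≠ a ∧ z ≠ b ∧ ((f = s(a, z) ∧ h = s(b, z)) ∨ (f = s(b, z) ∧ h = s(a, z))) := by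
  induction f using Sym2.ind with
  | _ u v =>
    induction h using Sym2.ind with
    | _ u' v' =>
      rw [Sym2.map_pair_eq, Sym2.map_pair_eq, Sym2.eq_iff] at him
      rw [SimpleGraph.mem_edgeSet] at hf hh
      rcases him with ⟨h1, h2⟩ | ⟨h1, h2⟩
      · exact img_eq_cases_aligned hab hf hh hfe hne h1 h2
      · have hne' : s(u, v) ≠ s(v', u') := by rw [Sym2.eq_swap (a := v') (b := u')]; exact hne
        obtain ⟨z, hza, hzb, hc⟩ := img_eq_cases_aligned hab hf hh.symm hfe hne' h1 h2
        refine ⟨z, hza, hzb, ?_⟩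
        rw [Sym2.eq_swap (a := v') (b := u')] at hc
        exact hc

lemma tri_props (hab : a ≠ b) {f h : Sym2 V} (ht : IsTriangleEdges G s(a, b) f h) :
    f ∈ G.edgeSet ∧ f ≠ s(a, b) ∧ h ∈ G.edgeSet ∧ h ≠ s(a, b) ∧ f ≠ h ∧
      Sym2.map (contractMap a b) f = Sym2.map (contractMap a b) h := by
  obtain ⟨x, y, z, hxy, hyz, hzx, he1, he2, he3⟩ := ht
  have hxyab : (x = a ∧ y = b) ∨ (x = b ∧ y = a) := Sym2.eq_iff.mp he1.symm
  rcases hxyab with ⟨hx, hy⟩ | ⟨hx, hy⟩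
  · rw [hy] at he2 hyz
    rw [hx] at he3 hzx
    -- f = s(b,z), h = s(z,a), Adj b z, Adj z a
    have hza : z ≠ a := hzx.ne
    have hzb : z ≠ b := hyz.ne'
    refine ⟨?_, ?_, ?_, ?_, ?_, ?_⟩
    · rw [he2]; exact hyz
    · rw [he2]; exact sym2_ne_ab hza hzb
    · rw [he3]; exact hzx
    · rw [he3]; intro hcon
      rcases Sym2.eq_iff.mp hcon with ⟨h1, -⟩ | ⟨h1, -⟩
      · exact hza h1
      · exact hzb h1
    · rw [he2, he3]; intro hcon
      rcases Sym2.eq_iff.mp hcon with ⟨-, h1⟩ | ⟨h1, -⟩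
      · exact hza h1
      · exact hab h1.symm
    · rw [he2, he3, Sym2.map_pair_eq, Sym2.map_pair_eq, cm_b, cm_of_ne hzb, cm_of_ne hab]
      exact Sym2.eq_swap
  · rw [hy] at he2 hyz
    rw [hx] at he3 hzx
    -- f = s(a,z), h = s(z,b), Adj a z, Adj z b
    have hza : z ≠ a := hyz.ne'
    have hzb : z ≠ b := hzx.ne
    refine ⟨?_, ?_, ?_, ?_, ?_, ?_⟩
    · rw [he2]; exact hyz
    · rw [he2]; exact sym2_ne_ab hza hzb
    · rw [he3]; exact hzx
    · rw [he3]; intro hcon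
      rcases Sym2.eq_iff.mp hcon with ⟨h1, -⟩ | ⟨h1, -⟩
      · exact hza h1
      · exact hzb h1
    · rw [he2, he3]; intro hcon
      rcases Sym2.eq_iff.mp hcon with ⟨h1, -⟩ | ⟨h1, -⟩
      · exact hza h1.symm
      · exact hab h1
    · rw [he2, he3, Sym2.map_pair_eq, Sym2.map_pair_eq, cm_b, cm_of_ne hzb, cm_of_ne hab]
      exact Sym2.eq_swap

lemma tri_of (hadj : G.Adj a b) {f h : Sym2 V} (hf : f ∈ G.edgeSet) (hh : h ∈ G.edgeSet)
    (hfe : f ≠ s(a, b)) (hne : f ≠ h)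
    (him : Sym2.map (contractMap a b) f = Sym2.map (contractMap a b) h) :
    IsTriangleEdges G s(a, b) f h := by
  obtain ⟨z, hza, hzb, hc⟩ := img_eq_cases hadj.ne hf hh hfe hne him
  rcases hc with ⟨hf', hh'⟩ | ⟨hf', hh'⟩
  · -- f = s(a,z), h = s(b,z)
    refine ⟨b, a, z, hadj.symm, ?_, ?_, Sym2.eq_swap, hf', by rw [hh']; exact Sym2.eq_swap⟩
    · exact G.mem_edgeSet.mp (hf' ▸ hf)
    · have := G.mem_edgeSet.mp (hh' ▸ hh)
      exact this.symm
  · -- f = s(b,z), h = s(a,z)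
    refine ⟨a, b, z, hadj, ?_, ?_, rfl, hf', by rw [hh']; exact Sym2.eq_swap⟩
    · exact G.mem_edgeSet.mp (hf' ▸ hf)
    · have := G.mem_edgeSet.mp (hh' ▸ hh)
      exact this.symm

lemma isContractEdge_iff (hadj : G.Adj a b) {f : Sym2 V} :
    IsContractEdge G s(a, b) f ↔ f ∈ G.edgeSet ∧ f ≠ s(a, b) ∧
      ∀ h ∈ G.edgeSet, h ≠ s(a, b) →
        Sym2.map (contractMap a b) h = Sym2.map (contractMap a b) f → h ≤ f := by
  constructor
  · rintro ⟨h1, h2, h3⟩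
    refine ⟨h1, h2, fun h' hh' hne him => ?_⟩
    by_contra hcon
    push_neg at hcon
    exact h3 h' hcon (tri_of hadj h1 hh' h2 (ne_of_lt hcon) him.symm)
  · rintro ⟨h1, h2, h3⟩
    refine ⟨h1, h2, fun h' hlt ht => ?_⟩
    obtain ⟨-, -, hh'E, hh'ne, -, him⟩ := tri_props hadj.ne ht
    exact absurd (h3 h' hh'E hh'ne him.symm) (not_le_of_gt hlt)

lemma contract_unique (hadj : G.Adj a b) {f h : Sym2 V}
    (hf : IsContractEdge G s(a, b) f) (hh : IsContractEdge G s(a, b) h)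
    (him : Sym2.map (contractMap a b) f = Sym2.map (contractMap a b) h) : f = h := by
  obtain ⟨hf1, hf2, hf3⟩ := (isContractEdge_iff hadj).mp hf
  obtain ⟨hh1, hh2, hh3⟩ := (isContractEdge_iff hadj).mp hh
  exact le_antisymm (hh3 f hf1 hf2 him) (hf3 h hh1 hh2 him.symm)

lemma exists_maxRep [Fintype V] (hadj : G.Adj a b) {d : Sym2 V}
    (hd : ∃ f, f ∈ G.edgeSet ∧ f ≠ s(a, b) ∧ Sym2.map (contractMap a b) f = d) :
    ∃ m, IsContractEdge G s(a, b) m ∧ Sym2.map (contractMap a b) m = d ∧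
      ∀ f ∈ G.edgeSet, f ≠ s(a, b) → Sym2.map (contractMap a b) f = d → f ≤ m := by
  classical
  set T : Set (Sym2 V) := {f | f ∈ G.edgeSet ∧ f ≠ s(a, b) ∧ Sym2.map (contractMap a b) f = d}
    with hT
  have hfin : T.Finite := Set.toFinite T
  obtain ⟨f0, hf0⟩ := hd
  obtain ⟨m, hmT, hmax⟩ := Set.exists_max_image T id hfin ⟨f0, hf0⟩
  refine ⟨m, ?_, hmT.2.2, fun f h1 h2 h3 => hmax f ⟨h1, h2, h3⟩⟩
  rw [isContractEdge_iff hadj]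
  exact ⟨hmT.1, hmT.2.1, fun h' hh' hne him => hmax h' ⟨hh', hne, him.trans hmT.2.2⟩⟩

lemma contract_adj_ne_b (hab : a ≠ b) {x y : V} (h : (contractGraph G a b).Adj x y) :
    x ≠ b ∧ y ≠ b := by
  obtain ⟨-, f, hf, hfe, hm⟩ := h
  obtain ⟨u, v, -, hcu, hcv⟩ := sym2_map_eq hm
  exact ⟨hcu ▸ cm_ne_b hab u, hcv ▸ cm_ne_b hab v⟩

lemma adj_of_rep (hab : a ≠ b) {f : Sym2 V} {u v : V} (hf : f ∈ G.edgeSet)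
    (hfe : f ≠ s(a, b)) (hrep : f = s(u, v)) :
    (contractGraph G a b).Adj (contractMap a b u) (contractMap a b v) := by
  refine ⟨?_, f, hf, hfe, by rw [hrep, Sym2.map_pair_eq]⟩
  intro hcon
  rcases cm_inj_cases hab hcon with h1 | ⟨h1, h2⟩ | ⟨h1, h2⟩
  · exact G.ne_of_adj (G.mem_edgeSet.mp (hrep ▸ hf)) h1
  · exact hfe (by rw [hrep, h1, h2])
  · exact hfe (by rw [hrep, h1, h2, Sym2.eq_swap])

lemma b_not_mem_support (hab : a ≠ b) :
    ∀ {x y : V} (p : (contractGraph G a b).Walk x y), x ≠ b → b ∉ p.support := by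
  intro x y p
  induction p with
  | nil => intro hn; simp [Ne.symm hn]
  | @cons x z y h p' ih =>
    intro hxb
    rw [Walk.support_cons, List.mem_cons]
    rintro (rfl | hmem)
    · exact hxb rfl
    · exact ih (contract_adj_ne_b hab h).2 hmem

lemma end_mem_tail {G' : SimpleGraph V} {u v : V} (p : G'.Walk u v) (hn : ¬ p.Nil) :
    v ∈ p.support.tail := by
  cases p with
  | nil => simp at hn
  | cons h p' => simpa using p'.end_mem_support

lemma support_concat {G' : SimpleGraph V} {u v : V} (p : G'.Walk u v) :
    p.support = p.support.dropLast ++ [v] := by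
  have h1 : p.support.reverse = v :: p.reverse.support.tail := by
    rw [← Walk.support_reverse]; exact Walk.support_eq_cons _
  have h2 : p.support = p.reverse.support.tail.reverse ++ [v] := by
    rw [← List.reverse_reverse p.support, h1]; simp
  rw [h2, List.dropLast_concat]

lemma edge_at_head {G' : SimpleGraph V} {x y : V} (p : G'.Walk x y) (hnd : p.support.Nodup) :
    ∀ g ∈ p.edges, x ∈ g → ∀ g' ∈ p.edges, x ∈ g' → g = g' := by
  cases p with
  | nil => simp
  | @cons x z y h p' =>
    have hx : x ∉ p'.support := by
      rw [Walk.support_cons] at hnd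
      exact (List.nodup_cons.mp hnd).1
    have key : ∀ g ∈ p'.edges, x ∉ g := by
      intro g hg hxg
      obtain ⟨w, rfl⟩ := Sym2.mem_iff_exists.mp hxg
      exact hx (p'.fst_mem_support_of_mem_edges hg)
    intro g hg hxg g' hg' hxg'
    rw [Walk.edges_cons, List.mem_cons] at hg hg'
    rcases hg with rfl | hg
    · rcases hg' with rfl | hg'
      · rfl
      · exact absurd hxg' (key g' hg')
    · exact absurd hxg (key g hg)

lemma second_vertex {G' : SimpleGraph V} {x y z : V} (p : G'.Walk x y) (hnd : p.support.Nodup)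
    (hz : s(x, z) ∈ p.edges) (hzx : z ≠ x) : ∃ m1, p.support = x :: z :: m1 := by
  cases p with
  | nil => simp at hz
  | @cons x v y h p' =>
    rw [Walk.edges_cons, List.mem_cons] at hz
    rcases hz with heq | hmem
    · rcases Sym2.eq_iff.mp heq with ⟨-, h2⟩ | ⟨-, h2⟩
      · subst h2
        refine ⟨p'.support.tail, ?_⟩
        rw [Walk.support_cons]
        conv_lhs => rw [Walk.support_eq_cons p']
      · exact absurd h2 hzx
    · exfalso
      have hx : x ∉ p'.support := by
        rw [Walk.support_cons] at hnd
        exact (List.nodup_cons.mp hnd).1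
      exact hx (p'.fst_mem_support_of_mem_edges hmem)

lemma list_collision {α : Type*} {l m1 L : List α} {aa z bb : α}
    (h1 : l = aa :: z :: m1) (h2 : l = L ++ [z, bb]) (hnd : l.Nodup)
    (hlen : 4 ≤ l.length) : False := by
  subst h1
  cases L with
  | nil =>
    simp only [List.nil_append, List.cons_eq_cons] at h2
    obtain ⟨-, -, h4⟩ := h2
    rw [h4] at hlen
    simp at hlen
  | cons c L' =>
    rw [List.cons_append] at h2
    obtain ⟨rfl, h3⟩ := List.cons_eq_cons.mp h2
    cases L' with
    | nil =>
      simp only [List.nil_append, List.cons_eq_cons] at h3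
      obtain ⟨-, rfl⟩ := h3
      simp at hlen
    | cons c2 L'' =>
      rw [List.cons_append] at h3
      obtain ⟨rfl, h4⟩ := List.cons_eq_cons.mp h3
      have : z ∈ m1 := by rw [h4]; simp
      rw [List.nodup_cons, List.nodup_cons] at hnd
      exact hnd.2.1 this

lemma exists_list_max {α : Type*} [LinearOrder α] :
    ∀ {l : List α}, l ≠ [] → ∃ m ∈ l, ∀ g ∈ l, g ≤ m := by
  intro l
  induction l with
  | nil => simp
  | cons c l ih =>
    intro _
    rcases eq_or_ne l [] with rfl | hne
    · exact ⟨c, by simp, by simp⟩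
    · obtain ⟨m, hm, hmax⟩ := ih hne
      rcases le_total c m with hcm | hmc
      · refine ⟨m, List.mem_cons_of_mem _ hm, ?_⟩
        intro g hg
        rcases List.mem_cons.mp hg with rfl | h
        · exact hcm
        · exact hmax g h
      · refine ⟨c, List.mem_cons_self, ?_⟩
        intro g hg
        rcases List.mem_cons.mp hg with rfl | h
        · exact le_rfl
        · exact (hmax g h).trans hmc

lemma proj_walk (hab : a ≠ b) {x y : V} (p : G.Walk x y)
    (hq : ∀ f ∈ p.edges, f ≠ s(a, b)) :
    ∃ p' : (contractGraph G a b).Walk (contractMap a b x) (contractMap a b y),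
      p'.edges = p.edges.map (Sym2.map (contractMap a b)) ∧
      p'.support = p.support.map (contractMap a b) := by
  induction p with
  | nil => exact ⟨Walk.nil, by simp, by simp⟩
  | @cons x z y h p' ih =>
    obtain ⟨q', hq'e, hq's⟩ := ih (fun f hf => hq f (List.mem_cons_of_mem _ hf))
    have hadj : (contractGraph G a b).Adj (contractMap a b x) (contractMap a b z) :=
      adj_of_rep hab (G.mem_edgeSet.mpr h) (hq _ (List.mem_cons_self)) rfl
    refine ⟨Walk.cons hadj q', ?_, ?_⟩
    · rw [Walk.edges_cons, Walk.edges_cons, List.map_cons, hq'e, Sym2.map_pair_eq]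
    · rw [Walk.support_cons, Walk.support_cons, List.map_cons, hq's]

lemma lift_walk [Fintype V] (hadj : G.Adj a b) :
    ∀ {x y : V} (p : (contractGraph G a b).Walk x y), x ≠ a → x ≠ b →
    (∀ v ∈ p.support.dropLast, v ≠ a ∧ v ≠ b) →
    ∃ c, contractMap a b c = contractMap a b y ∧ ∃ q : G.Walk x c,
      q.edges.map (Sym2.map (contractMap a b)) = p.edges ∧
      (∀ f ∈ q.edges, IsContractEdge G s(a, b) f) ∧
      q.support.map (contractMap a b) = p.support := by
  intro x y p
  induction p with
  | @nil u =>
    intro hxa hxb _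
    exact ⟨u, rfl, Walk.nil, by simp, by simp, by simp [cm_of_ne hxb]⟩
  | @cons x z y h p' ih =>
    intro hxa hxb hd
    have hz_ne_b : z ≠ b := by
      intro hcon
      obtain ⟨-, fw, hfw1, hfw2, hfw3⟩ := h
      obtain ⟨u1, v1, -, -, hcv⟩ := sym2_map_eq hfw3
      exact cm_ne_b hadj.ne v1 (hcv.trans hcon)
    -- max representative of the first edge
    have hwit : ∃ f, f ∈ G.edgeSet ∧ f ≠ s(a, b) ∧ Sym2.map (contractMap a b) f = s(x, z) := by
      obtain ⟨-, fw, hfw1, hfw2, hfw3⟩ := h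
      exact ⟨fw, hfw1, hfw2, hfw3⟩
    obtain ⟨m0, hm0c, hm0i, -⟩ := exists_maxRep hadj hwit
    obtain ⟨u1, v1, hrep, hcu, hcv⟩ := sym2_map_eq hm0i
    have hu1 : u1 = x := cm_preimage_of_ne_a hcu hxa
    subst hu1
    have hadj0 : G.Adj u1 v1 := G.mem_edgeSet.mp (hrep ▸ hm0c.1)
    have hhead : Sym2.map (contractMap a b) s(u1, v1) = s(u1, z) := by
      rw [← hrep]; exact hm0i
    have hm0c' : IsContractEdge G s(a, b) s(u1, v1) := hrep ▸ hm0c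
    by_cases hn : p'.Nil
    · -- p' is nil, z = y
      have hzy : z = y := hn.eq
      subst hzy
      have hp'nil : p' = Walk.nil := Walk.nil_iff_eq_nil.mp hn
      subst hp'nil
      refine ⟨v1, by rw [hcv, cm_of_ne hz_ne_b], Walk.cons hadj0 Walk.nil, ?_, ?_, ?_⟩
      · simp only [Walk.edges_cons, Walk.edges_nil, List.map_cons, List.map_nil, hhead]
      · intro f hf
        simp only [Walk.edges_cons, Walk.edges_nil, List.mem_cons, List.not_mem_nil,
          or_false] at hf
        rw [hf]
        exact hm0c' 
      · simp [cm_of_ne hxb, hcv]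
    · -- p' is not nil
      have hz_mem : z ∈ (Walk.cons h p').support.dropLast := by
        rw [Walk.support_cons]
        have hne : p'.support ≠ [] := Walk.support_ne_nil _
        rw [List.dropLast_cons_of_ne_nil hne]
        have ht : p'.support.tail ≠ [] := by
          have := Walk.length_support p'
          have hlen : 0 < p'.length := Walk.not_nil_iff_lt_length.mp hn
          intro hcon
          have := congrArg List.length hcon
          rw [List.length_tail, Walk.length_support, List.length_nil] at this
          omega
        rw [Walk.support_eq_cons p', List.dropLast_cons_of_ne_nil ht]
        exact List.mem_cons_of_mem _ (List.mem_cons_self)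
      obtain ⟨hza, hzb⟩ := hd z hz_mem
      have hv1 : v1 = z := cm_preimage_of_ne_a hcv hza
      subst hv1
      have hd' : ∀ v ∈ p'.support.dropLast, v ≠ a ∧ v ≠ b := by
        intro v hv
        refine hd v ?_
        rw [Walk.support_cons, List.dropLast_cons_of_ne_nil (Walk.support_ne_nil _)]
        exact List.mem_cons_of_mem _ hv
      obtain ⟨c, hc, q', hq'e, hq'c, hq's⟩ := ih hza hzb hd'
      refine ⟨c, hc, Walk.cons hadj0 q', ?_, ?_, ?_⟩
      · rw [Walk.edges_cons, Walk.edges_cons, List.map_cons, hq'e, hhead]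
      · intro f hf
        rw [Walk.edges_cons, List.mem_cons] at hf
        rcases hf with hf | hf'
        · rw [hf]; exact hm0c'
        · exact hq'c f hf'
      · rw [Walk.support_cons, Walk.support_cons, List.map_cons, hq's, cm_of_ne hxb]

lemma build_cbc [Fintype V] (hadj : G.Adj a b) {u : V} {p : (contractGraph G a b).Walk u u}
    (hcyc : p.IsCycle) {E0 : List (Sym2 V)}
    (hE0 : p.edges = E0.map (Sym2.map (contractMap a b)))
    (hE0G : ∀ g ∈ E0, g ∈ G.edgeSet ∧ g ≠ s(a, b))
    {m : Sym2 V} (hm : m ∈ E0) (hmax : ∀ g ∈ E0, g ≤ m)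
    {Y : Finset (Sym2 V)} (hYc : ∀ f ∈ Y, IsContractEdge G s(a, b) f)
    (hsub : ∀ g ∈ E0, g ≠ m → g ∈ Y) :
    ∃ B, IsContractBrokenCircuit G a b B ∧ B ⊆ ↑Y := by
  obtain ⟨m', hm'c, hm'i, hm'max⟩ := exists_maxRep hadj ⟨m, (hE0G m hm).1, (hE0G m hm).2, rfl⟩
  have hchar : ∀ f, IsContractEdge G s(a, b) f → Sym2.map (contractMap a b) f ∈ p.edges →
      f = m' ∨ (f ∈ Y ∧ f ≤ m) := by
    intro f hfc hfi
    rw [hE0] at hfi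
    obtain ⟨g, hg, hgi⟩ := List.mem_map.mp hfi
    by_cases hgm : g = m
    · left
      exact contract_unique hadj hfc hm'c (by rw [← hgi, hgm]; exact hm'i.symm)
    · have hgY := hsub g hg hgm
      have hfg : f = g := contract_unique hadj hfc (hYc g hgY) hgi.symm
      right
      exact ⟨hfg ▸ hgY, hfg ▸ hmax g hg⟩
  have hmm' : m ≤ m' := hm'max m (hE0G m hm).1 (hE0G m hm).2 rfl
  refine ⟨_, ⟨u, p, hcyc,
    {f | IsContractEdge G s(a, b) f ∧ Sym2.map (contractMap a b) f ∈ p.edges},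
    fun f => Iff.rfl, m', ⟨hm'c, by rw [hE0, hm'i]; exact List.mem_map_of_mem hm⟩, ?_, rfl⟩, ?_⟩
  · rintro g ⟨hgc, hgi⟩
    rcases hchar g hgc hgi with rfl | ⟨-, hle⟩
    · exact le_rfl
    · exact hle.trans hmm'
  · rintro f ⟨⟨hfc, hfi⟩, hfm'⟩
    rcases hchar f hfc hfi with rfl | ⟨hfY, -⟩
    · exact absurd rfl hfm'
    · exact hfY

lemma cycle_avoid_contra [Fintype V] (hadj : G.Adj a b)
    {Y : Finset (Sym2 V)} (hYc : ∀ f ∈ Y, IsContractEdge G s(a, b) f)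
    {u : V} (C : G.Walk u u) (hC : C.IsCycle)
    (hnot : ¬(a ∈ C.support ∧ b ∈ C.support)) {m : Sym2 V} (hm : m ∈ C.edges)
    (hmax : ∀ g ∈ C.edges, g ≤ m)
    (hsub : ∀ g ∈ C.edges, g ≠ m → g ≠ s(a, b) → g ∈ Y) :
    ∃ B, IsContractBrokenCircuit G a b B ∧ B ⊆ ↑Y := by
  have hqe : ∀ g ∈ C.edges, g ≠ s(a, b) := by
    intro g hg hcon
    rw [hcon] at hg
    exact hnot ⟨C.fst_mem_support_of_mem_edges hg, C.snd_mem_support_of_mem_edges hg⟩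
  obtain ⟨p, hpe, hps⟩ := proj_walk hadj.ne C hqe
  have hCnd : C.support.tail.Nodup := hC.support_nodup
  have hedN : C.edges.Nodup := hC.isCircuit.isTrail.edges_nodup
  have hinj : ∀ g1 ∈ C.edges, ∀ g2 ∈ C.edges,
      Sym2.map (contractMap a b) g1 = Sym2.map (contractMap a b) g2 → g1 = g2 := by
    intro g1 h1 g2 h2 him
    by_contra hne
    obtain ⟨z, -, -, hc⟩ := img_eq_cases hadj.ne (C.edges_subset_edgeSet h1)
      (C.edges_subset_edgeSet h2) (hqe g1 h1) hne him
    rcases hc with ⟨hA, hB⟩ | ⟨hA, hB⟩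
    · exact hnot ⟨C.fst_mem_support_of_mem_edges (hA ▸ h1),
        C.fst_mem_support_of_mem_edges (hB ▸ h2)⟩
    · exact hnot ⟨C.fst_mem_support_of_mem_edges (hB ▸ h2),
        C.fst_mem_support_of_mem_edges (hA ▸ h1)⟩
  have hpend : p.edges.Nodup := by
    rw [hpe]
    exact List.Nodup.map_on hinj hedN
  have hptn : p.support.tail.Nodup := by
    have hts : p.support.tail = C.support.tail.map (contractMap a b) := by
      rw [hps]
      conv_lhs => rw [Walk.support_eq_cons C]
      rfl
    rw [hts]
    refine List.Nodup.map_on ?_ hCnd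
    intro v1 h1 v2 h2 hc
    rcases cm_inj_cases hadj.ne hc with h | ⟨ha1, hb2⟩ | ⟨hb1, ha2⟩
    · exact h
    · exact absurd ⟨ha1 ▸ List.mem_of_mem_tail h1, hb2 ▸ List.mem_of_mem_tail h2⟩ hnot
    · exact absurd ⟨ha2 ▸ List.mem_of_mem_tail h2, hb1 ▸ List.mem_of_mem_tail h1⟩ hnot
  have hlen : p.edges.length = C.edges.length := by rw [hpe, List.length_map]
  have h3 : 3 ≤ C.length := hC.three_le_length
  have hpne : p ≠ Walk.nil := by
    intro hcon
    rw [hcon] at hlen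
    rw [Walk.length_edges] at hlen
    simp at hlen
    omega
  have hpcyc : p.IsCycle := (Walk.isCycle_def p).mpr ⟨(Walk.isTrail_def p).mpr hpend, hpne, hptn⟩
  exact build_cbc hadj hpcyc hpe (fun g hg => ⟨C.edges_subset_edgeSet hg, hqe g hg⟩) hm hmax hYc
    (fun g hg h1 => hsub g hg h1 (hqe g hg))

lemma arc_contra_main [Fintype V] (hadj : G.Adj a b)
    {Y : Finset (Sym2 V)} (hYc : ∀ f ∈ Y, IsContractEdge G s(a, b) f)
    (q : G.Walk a b) (hnd : q.support.Nodup) (hqe : ∀ f ∈ q.edges, f ≠ s(a, b))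
    {m : Sym2 V} (hm : m ∈ q.edges) (hmax : ∀ g ∈ q.edges, g ≤ m)
    (hsub : ∀ g ∈ q.edges, g ≠ m → g ∈ Y) (hlen : 3 ≤ q.length) :
    ∃ B, IsContractBrokenCircuit G a b B ∧ B ⊆ ↑Y := by
  obtain ⟨p0, hpe0, hps0⟩ := proj_walk hadj.ne q hqe
  have hcma : contractMap a b a = a := cm_of_ne hadj.ne
  have hcmb : contractMap a b b = a := cm_b
  set p := p0.copy hcma hcmb with hp
  have hpe : p.edges = q.edges.map (Sym2.map (contractMap a b)) := by
    rw [hp, Walk.edges_copy]; exact hpe0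
  have hps : p.support = q.support.map (contractMap a b) := by
    rw [hp, Walk.support_copy]; exact hps0
  have hlen4 : 4 ≤ q.support.length := by rw [Walk.length_support]; omega
  -- injectivity of the projection on edges
  have hinj : ∀ g1 ∈ q.edges, ∀ g2 ∈ q.edges,
      Sym2.map (contractMap a b) g1 = Sym2.map (contractMap a b) g2 → g1 = g2 := by
    intro g1 h1 g2 h2 him
    by_contra hne
    obtain ⟨z, hza, hzb, hc⟩ := img_eq_cases hadj.ne (q.edges_subset_edgeSet h1)
      (q.edges_subset_edgeSet h2) (hqe g1 h1) hne him
    have key : ∀ gA ∈ q.edges, ∀ gB ∈ q.edges, gA = s(a, z) → gB = s(b, z) → False := by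
      intro gA hA gB hB hArep hBrep
      obtain ⟨m1, hm1⟩ := second_vertex q hnd (hArep ▸ hA) hza
      have hndr : q.reverse.support.Nodup := by
        rw [Walk.support_reverse]; exact List.nodup_reverse.mpr hnd
      have hBrev : s(b, z) ∈ q.reverse.edges := by
        rw [Walk.edges_reverse]; exact List.mem_reverse.mpr (hBrep ▸ hB)
      obtain ⟨m2, hm2⟩ := second_vertex q.reverse hndr hBrev hzb
      have hsuprev : q.support = m2.reverse ++ [z, b] := by
        have h0 := congrArg List.reverse hm2
        rw [Walk.support_reverse, List.reverse_reverse] at h0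
        rw [h0]; simp
      exact list_collision hm1 hsuprev hnd hlen4
    rcases hc with ⟨hA, hB⟩ | ⟨hA, hB⟩
    · exact key g1 h1 g2 h2 hA hB
    · exact key g2 h2 g1 h1 hB hA
  have hpath : q.IsPath := (Walk.isPath_def q).mpr hnd
  have hqed : q.edges.Nodup := hpath.isTrail.edges_nodup
  have hpend : p.edges.Nodup := by rw [hpe]; exact List.Nodup.map_on hinj hqed
  -- support-tail structure
  have hcc := support_concat q
  obtain ⟨dl', hdl⟩ : ∃ dl', q.support.dropLast = a :: dl' := by
    cases hdlc : q.support.dropLast with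
    | nil =>
      exfalso
      rw [hdlc] at hcc
      rw [hcc] at hlen4
      simp at hlen4
    | cons a0 dl' =>
      have hq0 : q.support = a0 :: (dl' ++ [b]) := by rw [hcc, hdlc]; simp
      have ha0 : a = a0 := by
        have h2' := (Walk.support_eq_cons q).symm.trans hq0
        exact (List.cons_eq_cons.mp h2').1
      exact ⟨dl', by rw [ha0]⟩
  have htail : q.support.tail = dl' ++ [b] := by
    have h0 : a :: (dl' ++ [b]) = a :: q.support.tail := by
      rw [← List.cons_append, ← hdl, ← hcc]
      exact Walk.support_eq_cons q
    exact ((List.cons_eq_cons.mp h0).2).symm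
  have hnd_do : (q.support.dropLast ++ [b]).Nodup := by rw [← hcc]; exact hnd
  have hbndl : b ∉ q.support.dropLast := by
    have hdisj := List.disjoint_of_nodup_append hnd_do
    intro hmem
    exact hdisj hmem (List.mem_singleton.mpr rfl)
  have hbdl' : b ∉ dl' := fun hmem => hbndl (by rw [hdl]; exact List.mem_cons_of_mem _ hmem)
  have handl : a ∉ q.support.tail :=
    (List.nodup_cons.mp (by rw [← Walk.support_eq_cons q]; exact hnd)).1
  have hadl' : a ∉ dl' := fun hmem => handl (by rw [htail]; exact List.mem_append_left _ hmem)
  have hdl'nd : dl'.Nodup := by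
    have h0 := (List.nodup_append.mp hnd_do).1
    rw [hdl] at h0
    exact (List.nodup_cons.mp h0).2
  have hmap_dl' : dl'.map (contractMap a b) = dl' := by
    have h0 : dl'.map (contractMap a b) = dl'.map id :=
      List.map_congr_left (fun v hv => cm_of_ne (fun hcon => hbdl' (hcon ▸ hv)))
    rw [h0, List.map_id]
  have hptail : p.support.tail = dl' ++ [a] := by
    have h0 : q.support = a :: (dl' ++ [b]) := by
      rw [Walk.support_eq_cons q, htail]
    rw [hps, h0]
    simp [hmap_dl', cm_b, hcma]
  have hptn : p.support.tail.Nodup := by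
    rw [hptail, List.nodup_append]
    refine ⟨hdl'nd, List.nodup_singleton a, ?_⟩
    intro x hx y hy hxy
    rw [List.mem_singleton] at hy
    exact hadl' (by rw [← hy, ← hxy]; exact hx)
  have hlene : p.edges.length = q.edges.length := by rw [hpe, List.length_map]
  have hpne : p ≠ Walk.nil := by
    intro hcon
    rw [hcon] at hlene
    rw [Walk.length_edges, Walk.length_edges] at hlene
    simp at hlene
    omega
  have hpcyc : p.IsCycle := (Walk.isCycle_def p).mpr ⟨(Walk.isTrail_def p).mpr hpend, hpne, hptn⟩
  exact build_cbc hadj hpcyc hpe (fun g hg => ⟨q.edges_subset_edgeSet hg, hqe g hg⟩) hm hmax hYc hsub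

lemma arc_contra [Fintype V] (hadj : G.Adj a b)
    {Y : Finset (Sym2 V)} (hYc : ∀ f ∈ Y, IsContractEdge G s(a, b) f)
    (q : G.Walk a b) (hnd : q.support.Nodup) (hqe : ∀ f ∈ q.edges, f ≠ s(a, b))
    {m : Sym2 V} (hm : m ∈ q.edges) (hmax : ∀ g ∈ q.edges, g ≤ m)
    (hsub : ∀ g ∈ q.edges, g ≠ m → g ∈ Y) :
    ∃ B, IsContractBrokenCircuit G a b B ∧ B ⊆ ↑Y := by
  cases q with
  | nil => exact absurd hadj (G.loopless.irrefl a)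
  | @cons a z b h1 q1 =>
    cases q1 with
    | nil =>
      exfalso
      exact hqe s(a, b) (by simp) rfl
    | @cons z z2 b h2 q2 =>
      cases q2 with
      | nil =>
        -- length-2 case : q = a - z - b
        exfalso
        have hf12 : s(a, z) ≠ s(z, b) := by
          intro hcon
          rcases Sym2.eq_iff.mp hcon with ⟨h1', -⟩ | ⟨h1', -⟩
          · exact h1.ne h1'
          · exact hadj.ne h1'
        have hzb : z ≠ b := h2.ne
        have hedges : (Walk.cons h1 (Walk.cons h2 Walk.nil)).edges = [s(a, z), s(z, b)] := rfl
        have himg : Sym2.map (contractMap a b) s(a, z) = Sym2.map (contractMap a b) s(z, b) := by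
          rw [Sym2.map_pair_eq, Sym2.map_pair_eq, cm_of_ne hadj.ne, cm_of_ne hzb, cm_b]
          exact Sym2.eq_swap
        have hmem1 : s(a, z) ∈ (Walk.cons h1 (Walk.cons h2 Walk.nil)).edges := by
          rw [hedges]; simp
        have hmem2 : s(z, b) ∈ (Walk.cons h1 (Walk.cons h2 Walk.nil)).edges := by
          rw [hedges]; simp
        have hm0 := hm
        rw [hedges] at hm0
        rcases List.mem_cons.mp hm0 with hmeq | hm'
        · -- m = s(a,z); the other edge s(z,b) is in Y
          have hoY : s(z, b) ∈ Y := hsub _ hmem2 (fun hcon => hf12 (hcon.trans hmeq).symm)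
          have hoc := hYc _ hoY
          obtain ⟨-, -, h3⟩ := (isContractEdge_iff hadj).mp hoc
          have hle : m ≤ s(z, b) := by
            refine h3 m ?_ (hqe m hm) ?_
            · rw [hmeq]; exact G.mem_edgeSet.mpr h1
            · rw [hmeq]; exact himg
          have hge : s(z, b) ≤ m := hmax _ hmem2
          exact hf12 (hmeq.symm.trans (le_antisymm hle hge))
        · rcases List.mem_cons.mp hm' with hmeq | hm''
          · -- m = s(z,b)
            have hoY : s(a, z) ∈ Y := hsub _ hmem1 (fun hcon => hf12 (hcon.trans hmeq))
            have hoc := hYc _ hoY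
            obtain ⟨-, -, h3⟩ := (isContractEdge_iff hadj).mp hoc
            have hle : m ≤ s(a, z) := by
              refine h3 m ?_ (hqe m hm) ?_
              · rw [hmeq]; exact G.mem_edgeSet.mpr h2
              · rw [hmeq]; exact himg.symm
            have hge : s(a, z) ≤ m := hmax _ hmem1
            exact hf12 ((le_antisymm hle hge).symm.trans hmeq)
          · simp at hm''
      | cons h3 q3 =>
        exact arc_contra_main hadj hYc _ hnd hqe hm hmax hsub
          (by simp only [Walk.length_cons]; omega)

lemma tri_bc (hadj : G.Adj a b) (hmin : ∀ f ∈ G.edgeSet, s(a, b) ≤ f) {f h' : Sym2 V}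
    (hlt : f < h') (ht : IsTriangleEdges G s(a, b) f h') :
    ∃ B', IsBrokenCircuit G B' ∧ B' ⊆ {s(a, b), f} := by
  obtain ⟨x, y, z, hxy, hyz, hzx, he1, he2, he3⟩ := ht
  set w : G.Walk x x := Walk.cons hxy (Walk.cons hyz (Walk.cons hzx Walk.nil)) with hw
  have hedges : w.edges = [s(x, y), s(y, z), s(z, x)] := rfl
  have hcyc : w.IsCycle := by
    rw [hw]
    apply (Walk.cons_isCycle_iff _ hxy).mpr
    constructor
    · rw [Walk.isPath_def]
      have h0 : (Walk.cons hyz (Walk.cons hzx Walk.nil)).support = [y, z, x] := rfl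
      rw [h0]
      simp only [List.nodup_cons, List.mem_cons, List.not_mem_nil, or_false, List.mem_singleton,
        List.nodup_nil, and_true, not_or]
      exact ⟨⟨hyz.ne, hxy.ne'⟩, hzx.ne, not_false⟩
    · simp only [Walk.edges_cons, Walk.edges_nil, List.mem_cons, List.not_mem_nil, or_false]
      push_neg
      constructor
      · intro hcon
        rcases Sym2.eq_iff.mp hcon with ⟨h1, -⟩ | ⟨h1, -⟩
        · exact hxy.ne h1
        · exact hzx.ne h1.symm
      · intro hcon
        rcases Sym2.eq_iff.mp hcon with ⟨h1, -⟩ | ⟨-, h2⟩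
        · exact hzx.ne h1.symm
        · exact hyz.ne h2
  have hh'E : h' ∈ G.edgeSet := by rw [he3]; exact G.mem_edgeSet.mpr hzx
  refine ⟨_, ⟨x, w, hcyc, h', ?_, ?_, rfl⟩, ?_⟩
  · rw [hedges, he3]; simp
  · intro g hg
    rw [hedges] at hg
    rcases List.mem_cons.mp hg with rfl | hg'
    · rw [← he1]; exact hmin h' hh'E
    · rcases List.mem_cons.mp hg' with rfl | hg''
      · rw [← he2]; exact le_of_lt hlt
      · rcases List.mem_cons.mp hg'' with rfl | hg3
        · rw [← he3]
        · simp at hg3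
  · intro g hg
    obtain ⟨hg1, hg2⟩ := hg
    rw [Set.mem_setOf_eq, hedges] at hg1
    rcases List.mem_cons.mp hg1 with rfl | hg'
    · exact Set.mem_insert_iff.mpr (Or.inl he1.symm)
    · rcases List.mem_cons.mp hg' with rfl | hg''
      · exact Set.mem_insert_iff.mpr (Or.inr (by rw [← he2]; rfl))
      · rcases List.mem_cons.mp hg'' with rfl | hg3
        · exact absurd (by rw [Set.mem_singleton_iff, he3]) hg2
        · simp at hg3

lemma lift_bc [Fintype V] (hadj : G.Adj a b) (hmin : ∀ f ∈ G.edgeSet, s(a, b) ≤ f)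
    {B : Set (Sym2 V)} (hB : IsContractBrokenCircuit G a b B) :
    ∃ B', IsBrokenCircuit G B' ∧ B' ⊆ B ∪ {s(a, b)} := by
  obtain ⟨u, w, hcyc, S, hS, fm, hfmS, hfmax, rfl⟩ := hB
  have hfmc : IsContractEdge G s(a, b) fm := ((hS fm).mp hfmS).1
  have hfmE : fm ∈ G.edgeSet := hfmc.1
  have hcma : contractMap a b a = a := cm_of_ne hadj.ne
  by_cases ha : a ∈ w.support
  · -- the cycle passes through a : rotate so that it starts at a
    obtain ⟨w₂, hw₂⟩ : ∃ w₂ : (contractGraph G a b).Walk a a, w₂ = w.rotate a ha := ⟨_, rfl⟩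
    have hcyc₂ : w₂.IsCycle := hw₂ ▸ hcyc.rotate ha
    have hrot : w₂.edges ~r w.edges := hw₂ ▸ w.rotate_edges a ha
    have hmemiff : ∀ g, g ∈ w₂.edges ↔ g ∈ w.edges := fun g => hrot.mem_iff
    obtain ⟨z, h1, p₁, hw2c⟩ := Walk.not_nil_iff.mp hcyc₂.not_nil
    have hndp₁ : p₁.support.Nodup := by
      have h0 := hcyc₂.support_nodup
      rw [hw2c, Walk.support_cons, List.tail_cons] at h0
      exact h0
    have hp₁len : 2 ≤ p₁.length := by
      have h3 := hcyc₂.three_le_length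
      rw [hw2c, Walk.length_cons] at h3
      omega
    have hp₁nn : ¬ p₁.Nil := by
      rw [Walk.nil_iff_length_eq]
      omega
    have hz_b : z ≠ b := (contract_adj_ne_b hadj.ne h1).2
    have hz_a : z ≠ a := h1.ne' 
    have hbw2 : b ∉ w₂.support := b_not_mem_support hadj.ne w₂ hadj.ne
    have hbp₁ : b ∉ p₁.support := by
      intro hmem
      exact hbw2 (by rw [hw2c, Walk.support_cons]; exact List.mem_cons_of_mem _ hmem)
    have hconc := support_concat p₁
    have hadrop : a ∉ p₁.support.dropLast := by
      have h0 : (p₁.support.dropLast ++ [a]).Nodup := by rw [← hconc]; exact hndp₁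
      have hdisj := List.disjoint_of_nodup_append h0
      intro hmem
      exact hdisj hmem (List.mem_singleton.mpr rfl)
    have hd : ∀ v ∈ p₁.support.dropLast, v ≠ a ∧ v ≠ b := by
      intro v hv
      constructor
      · intro hcon; subst hcon; exact hadrop hv
      · intro hcon; subst hcon; exact hbp₁ (List.dropLast_subset _ hv)
    obtain ⟨c, hc, q₁, hq₁e, hq₁c, hq₁s⟩ := lift_walk hadj p₁ hz_a hz_b hd
    have hcab : c = a ∨ c = b := (cm_eq_a_iff hadj.ne).mp (hc.trans hcma)
    -- the maximal representative of the first edge s(a, z)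
    have hwit : ∃ f, f ∈ G.edgeSet ∧ f ≠ s(a, b) ∧ Sym2.map (contractMap a b) f = s(a, z) := by
      obtain ⟨-, fw, hfw1, hfw2, hfw3⟩ := h1
      exact ⟨fw, hfw1, hfw2, hfw3⟩
    obtain ⟨f0, hf0c, hf0i, -⟩ := exists_maxRep hadj hwit
    obtain ⟨u1, v1, hrep, hcu, hcv⟩ := sym2_map_eq hf0i
    have hv1 : v1 = z := cm_preimage_of_ne_a hcv hz_a
    subst hv1
    have hu1ab : u1 = a ∨ u1 = b := (cm_eq_a_iff hadj.ne).mp hcu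
    have hadj0 : G.Adj u1 v1 := G.mem_edgeSet.mp (hrep ▸ hf0c.1)
    have hf0ne : f0 ∉ q₁.edges := by
      intro hmem
      have h0 : Sym2.map (contractMap a b) f0 ∈ p₁.edges := by
        rw [← hq₁e]
        exact List.mem_map_of_mem hmem
      rw [hf0i] at h0
      have hnd := hcyc₂.isCircuit.isTrail.edges_nodup
      rw [hw2c, Walk.edges_cons] at hnd
      exact (List.nodup_cons.mp hnd).1 h0
    have hq₁nd : q₁.support.Nodup := List.Nodup.of_map _ (hq₁s ▸ hndp₁)
    have hq₁path : q₁.IsPath := (Walk.isPath_def q₁).mpr hq₁nd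
    -- edge bookkeeping
    have hw2edges : w₂.edges = s(a, v1) :: p₁.edges := by rw [hw2c, Walk.edges_cons]
    have himg_all : ∀ f' ∈ f0 :: q₁.edges, IsContractEdge G s(a, b) f' := by
      intro f' hf'
      rcases List.mem_cons.mp hf' with rfl | hf''
      · exact hf0c
      · exact hq₁c f' hf''
    have himg_list : (f0 :: q₁.edges).map (Sym2.map (contractMap a b)) = w₂.edges := by
      rw [List.map_cons, hq₁e, hf0i, hw2edges]
    have hfm_mem : fm ∈ f0 :: q₁.edges := by
      have h0 : Sym2.map (contractMap a b) fm ∈ w₂.edges :=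
        (hmemiff _).mpr ((hS fm).mp hfmS).2
      rw [← himg_list] at h0
      obtain ⟨f', hf', hfi⟩ := List.mem_map.mp h0
      have heq : fm = f' := contract_unique hadj hfmc (himg_all f' hf') hfi.symm
      rw [heq]; exact hf'
    have hmem_S : ∀ g ∈ f0 :: q₁.edges, g ∈ S := by
      intro g hg
      refine (hS g).mpr ⟨himg_all g hg, (hmemiff _).mp ?_⟩
      rw [← himg_list]
      exact List.mem_map_of_mem hg
    -- the dropLast part of the lift
    have hcmc : contractMap a b c = a := hc.trans hcma
    have hdLmap : q₁.support.dropLast.map (contractMap a b) = p₁.support.dropLast := by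
      have h0 := hq₁s
      rw [support_concat q₁, List.map_append] at h0
      conv_rhs at h0 => rw [hconc]
      simp only [List.map_cons, List.map_nil, hcmc] at h0
      exact (List.append_inj' h0 rfl).1
    by_cases huc : u1 = c
    · -- the lift closes up without the edge s(a, b)
      subst huc
      set Q : G.Walk u1 u1 := Walk.cons hadj0 q₁ with hQ
      have hQcyc : Q.IsCycle := by
        rw [hQ]
        apply (Walk.cons_isCycle_iff q₁ hadj0).mpr
        refine ⟨hq₁path, ?_⟩
        intro hmem
        exact hf0ne (hrep ▸ hmem)
      have hQe : Q.edges = f0 :: q₁.edges := by rw [hQ, Walk.edges_cons, ← hrep]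
      refine ⟨_, ⟨u1, Q, hQcyc, fm, by rw [hQe]; exact hfm_mem, ?_, rfl⟩, ?_⟩
      · intro g hg
        rw [hQe] at hg
        exact hfmax g (hmem_S g hg)
      · intro g hg
        obtain ⟨hg1, hg2⟩ := hg
        rw [Set.mem_setOf_eq, hQe] at hg1
        exact Or.inl ⟨hmem_S g hg1, hg2⟩
    · -- close up using the edge s(a, b)
      have hscu : s(c, u1) = s(a, b) := by
        rcases hcab with rfl | rfl <;> rcases hu1ab with h2 | h2
        · exact absurd (h2.trans rfl) huc
        · rw [h2]
        · rw [h2, Sym2.eq_swap]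
        · exact absurd (h2.trans rfl) huc
      have hadjcu : G.Adj c u1 := G.mem_edgeSet.mp (by rw [hscu]; exact hadj)
      have hu1ns : u1 ∉ q₁.support := by
        intro hmem
        rw [support_concat q₁, List.mem_append, List.mem_singleton] at hmem
        rcases hmem with hmem | hmem
        · have h0 : contractMap a b u1 ∈ p₁.support.dropLast := by
            rw [← hdLmap]
            exact List.mem_map_of_mem hmem
          rw [hcu] at h0
          exact hadrop h0
        · exact huc hmem
      have hinner : (Walk.cons hadj0 q₁).IsPath :=
        (Walk.cons_isPath_iff hadj0 q₁).mpr ⟨hq₁path, hu1ns⟩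
      set Q : G.Walk c c := Walk.cons hadjcu (Walk.cons hadj0 q₁) with hQ
      have hQcyc : Q.IsCycle := by
        rw [hQ]
        apply (Walk.cons_isCycle_iff _ hadjcu).mpr
        refine ⟨hinner, ?_⟩
        intro hmem
        rw [Walk.edges_cons, List.mem_cons] at hmem
        rcases hmem with hmem | hmem
        · rw [hscu, ← hrep] at hmem
          exact hf0c.2.1 hmem.symm
        · rw [hscu] at hmem
          exact (hq₁c _ hmem).2.1 rfl
      have hQe : Q.edges = s(c, u1) :: f0 :: q₁.edges := by
        rw [hQ, Walk.edges_cons, Walk.edges_cons, ← hrep]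
      refine ⟨_, ⟨c, Q, hQcyc, fm, ?_, ?_, rfl⟩, ?_⟩
      · rw [hQe]
        exact List.mem_cons_of_mem _ hfm_mem
      · intro g hg
        rw [hQe] at hg
        rcases List.mem_cons.mp hg with rfl | hg'
        · rw [hscu]
          exact hmin fm hfmE
        · exact hfmax g (hmem_S g hg')
      · intro g hg
        obtain ⟨hg1, hg2⟩ := hg
        rw [Set.mem_setOf_eq, hQe] at hg1
        rcases List.mem_cons.mp hg1 with rfl | hg'
        · exact Or.inr (by rw [Set.mem_singleton_iff, hscu])
        · exact Or.inl ⟨hmem_S g hg', hg2⟩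
  · -- a ∉ w.support : the cycle lifts directly
    have hune : u ≠ a := fun hcon => ha (hcon ▸ w.start_mem_support)
    have hub : u ≠ b := by
      obtain ⟨z0, h1, q0, hwc⟩ := Walk.not_nil_iff.mp hcyc.not_nil
      exact (contract_adj_ne_b hadj.ne h1).1
    have hbw : b ∉ w.support := b_not_mem_support hadj.ne w hub
    have hd : ∀ v ∈ w.support.dropLast, v ≠ a ∧ v ≠ b := by
      intro v hv
      constructor
      · intro hcon; subst hcon; exact ha (List.dropLast_subset _ hv)
      · intro hcon; subst hcon; exact hbw (List.dropLast_subset _ hv)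
    obtain ⟨c, hc, q, hqe, hqc, hqs⟩ := lift_walk hadj w hune hub hd
    have hcu : c = u := by
      have h0 : contractMap a b c = u := hc.trans (cm_of_ne hub)
      exact cm_preimage_of_ne_a h0 hune
    subst hcu
    have hqnd_e : q.edges.Nodup :=
      List.Nodup.of_map _ (by rw [hqe]; exact hcyc.isCircuit.isTrail.edges_nodup)
    have hqtn : q.support.tail.Nodup := by
      have hA := hqs
      rw [Walk.support_eq_cons q, Walk.support_eq_cons w, List.map_cons] at hA
      have h0 := (List.cons_eq_cons.mp hA).2
      exact List.Nodup.of_map _ (by rw [h0]; exact hcyc.support_nodup)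
    have hlene : q.edges.length = w.edges.length := by rw [← hqe, List.length_map]
    have hqne : q ≠ Walk.nil := by
      intro hcon
      have h3 := hcyc.three_le_length
      rw [hcon] at hlene
      rw [Walk.length_edges, Walk.length_edges] at hlene
      simp at hlene
      omega
    have hqcyc : q.IsCycle :=
      (Walk.isCycle_def q).mpr ⟨(Walk.isTrail_def q).mpr hqnd_e, hqne, hqtn⟩
    have hfm_mem : fm ∈ q.edges := by
      have h0 : Sym2.map (contractMap a b) fm ∈ w.edges := ((hS fm).mp hfmS).2
      rw [← hqe] at h0
      obtain ⟨f', hf', hfi⟩ := List.mem_map.mp h0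
      have heq : fm = f' := contract_unique hadj hfmc (hqc f' hf') hfi.symm
      rw [heq]; exact hf'
    have hmem_S : ∀ g ∈ q.edges, g ∈ S := by
      intro g hg
      exact (hS g).mpr ⟨hqc g hg, by rw [← hqe]; exact List.mem_map_of_mem hg⟩
    refine ⟨_, ⟨c, q, hqcyc, fm, hfm_mem, fun g hg => hfmax g (hmem_S g hg), rfl⟩, ?_⟩
    rintro g ⟨hg1, hg2⟩
    exact Or.inl ⟨hmem_S g hg1, hg2⟩

end ContractionBC

open ContractionBC

/-- If `e = s(a, b)` is the minimum edge of a finite simple graph `G` and `k ≥ 1`,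
then there are as many `(k-1)`-subsets of `E(G|ₑ)` including no broken circuit of
`G|ₑ` as there are `k`-subsets of `E(G)` containing `e` and including no broken
circuit of `G`; moreover `X ↦ X \ {e}` is a bijection from the latter family to the
former. -/
theorem contraction_count_broken_circuit {V : Type*} [Fintype V] [DecidableEq V]
    [LinearOrder (Sym2 V)] (G : SimpleGraph V) (a b : V) (e : Sym2 V)
    (hab : e = s(a, b)) (he : e ∈ G.edgeSet) (hmin : ∀ f ∈ G.edgeSet, e ≤ f)
    (k : ℕ) (hk : 1 ≤ k) :
    {Y : Finset (Sym2 V) | ↑Y ⊆ {f | IsContractEdge G e f} ∧ Y.card = k - 1 ∧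
        ¬ ∃ B, IsContractBrokenCircuit G a b B ∧ B ⊆ ↑Y}.ncard =
      {X : Finset (Sym2 V) | ↑X ⊆ G.edgeSet ∧ X.card = k ∧ e ∈ X ∧
        ¬ ∃ B, IsBrokenCircuit G B ∧ B ⊆ ↑X}.ncard ∧
    Set.BijOn (fun X : Finset (Sym2 V) => X.erase e)
      {X : Finset (Sym2 V) | ↑X ⊆ G.edgeSet ∧ X.card = k ∧ e ∈ X ∧
        ¬ ∃ B, IsBrokenCircuit G B ∧ B ⊆ ↑X}
      {Y : Finset (Sym2 V) | ↑Y ⊆ {f | IsContractEdge G e f} ∧ Y.card = k - 1 ∧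
        ¬ ∃ B, IsContractBrokenCircuit G a b B ∧ B ⊆ ↑Y} := by
  classical
  subst hab
  have hadj : G.Adj a b := G.mem_edgeSet.mp he
  have hbij : Set.BijOn (fun X : Finset (Sym2 V) => X.erase s(a, b))
      {X : Finset (Sym2 V) | ↑X ⊆ G.edgeSet ∧ X.card = k ∧ s(a, b) ∈ X ∧
        ¬ ∃ B, IsBrokenCircuit G B ∧ B ⊆ ↑X}
      {Y : Finset (Sym2 V) | ↑Y ⊆ {f | IsContractEdge G s(a, b) f} ∧ Y.card = k - 1 ∧
        ¬ ∃ B, IsContractBrokenCircuit G a b B ∧ B ⊆ ↑Y} := by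
    refine ⟨?_, ?_, ?_⟩
    · -- MapsTo
      intro X hX
      obtain ⟨hXE, hXcard, hXe, hXbc⟩ := hX
      refine ⟨?_, ?_, ?_⟩
      · intro f hf
        rw [Finset.coe_erase, Set.mem_diff, Set.mem_singleton_iff] at hf
        obtain ⟨hf1, hf2⟩ := hf
        refine ⟨hXE hf1, hf2, ?_⟩
        intro h' hlt ht
        obtain ⟨B', hbc, hsub⟩ := tri_bc hadj hmin hlt ht
        refine hXbc ⟨B', hbc, hsub.trans ?_⟩
        intro g hg
        rcases Set.mem_insert_iff.mp hg with rfl | hg'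
        · exact Finset.mem_coe.mpr hXe
        · rw [Set.mem_singleton_iff] at hg'
          rw [hg']
          exact hf1
      · rw [Finset.card_erase_of_mem hXe, hXcard]
      · rintro ⟨B, hB, hBsub⟩
        obtain ⟨B', hbc, hsub⟩ := lift_bc hadj hmin hB
        refine hXbc ⟨B', hbc, ?_⟩
        intro g hg
        rcases hsub hg with hg' | hg'
        · have h0 := hBsub hg'
          rw [Finset.coe_erase, Set.mem_diff] at h0
          exact h0.1
        · rw [Set.mem_singleton_iff] at hg'
          rw [hg']
          exact Finset.mem_coe.mpr hXe
    · -- InjOn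
      intro X1 h1 X2 h2 heq
      have heq' : X1.erase s(a, b) = X2.erase s(a, b) := heq
      rw [← Finset.insert_erase h1.2.2.1, ← Finset.insert_erase h2.2.2.1, heq']
    · -- SurjOn
      intro Y hY
      obtain ⟨hYc', hYcard, hYbc⟩ := hY
      have hYc : ∀ f ∈ Y, IsContractEdge G s(a, b) f := fun f hf => hYc' (Finset.mem_coe.mpr hf)
      have heY : s(a, b) ∉ Y := fun hmem => (hYc _ hmem).2.1 rfl
      refine ⟨insert s(a, b) Y, ⟨?_, ?_, ?_, ?_⟩, ?_⟩
      · intro f hf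
        rw [Finset.coe_insert, Set.mem_insert_iff] at hf
        rcases hf with rfl | hf
        · exact he
        · exact (hYc f hf).1
      · rw [Finset.card_insert_of_notMem heY, hYcard]
        omega
      · exact Finset.mem_insert_self _ _
      · -- no broken circuit in insert s(a,b) Y
        rintro ⟨B, ⟨u, C, hcyc, fm, hfm, hmax, rfl⟩, hBsub⟩
        have h3len : 3 ≤ C.length := hcyc.three_le_length
        have hnde : C.edges.Nodup := hcyc.isCircuit.isTrail.edges_nodup
        have hgY : ∀ g ∈ C.edges, g ≠ fm → g ≠ s(a, b) → g ∈ Y := by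
          intro g hg h1 h2
          have h0 := hBsub ⟨Set.mem_setOf_eq ▸ hg, by rw [Set.mem_singleton_iff]; exact h1⟩
          rw [Finset.coe_insert, Set.mem_insert_iff] at h0
          rcases h0 with h0 | h0
          · exact absurd h0 h2
          · exact Finset.mem_coe.mp h0
        have hfmne : fm ≠ s(a, b) := by
          intro hcon
          rcases hE : C.edges with _ | ⟨g1, rest1⟩
          · have h0 := C.length_edges
            rw [hE] at h0
            simp at h0
            omega
          · rcases hrest : rest1 with _ | ⟨g2, rest⟩
            · have h0 := C.length_edges
              rw [hE, hrest] at h0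
              simp at h0
              omega
            · rw [hrest] at hE
              have hg1 : g1 ∈ C.edges := by rw [hE]; exact List.mem_cons_self
              have hg2 : g2 ∈ C.edges := by
                rw [hE]; exact List.mem_cons_of_mem _ (List.mem_cons_self)
              have hne12 : g1 ≠ g2 := by
                rw [hE] at hnde
                intro hcc
                exact (List.nodup_cons.mp hnde).1 (hcc ▸ List.mem_cons_self)
              have e1 : g1 = s(a, b) :=
                le_antisymm (hcon ▸ hmax g1 hg1) (hmin g1 (C.edges_subset_edgeSet hg1))
              have e2 : g2 = s(a, b) :=
                le_antisymm (hcon ▸ hmax g2 hg2) (hmin g2 (C.edges_subset_edgeSet hg2))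
              exact hne12 (e1.trans e2.symm)
        by_cases hboth : a ∈ C.support ∧ b ∈ C.support
        · -- both endpoints of the contracted edge lie on the cycle
          obtain ⟨haC, hbC⟩ := hboth
          have hbtail : b ∈ C.support.tail := by
            have hb0 : b ∈ u :: C.support.tail := by
              rw [← Walk.support_eq_cons]; exact hbC
            rcases List.mem_cons.mp hb0 with hb0 | hb0
            · rw [hb0]; exact end_mem_tail C hcyc.not_nil
            · exact hb0
          obtain ⟨C', hC'⟩ : ∃ C' : G.Walk a a, C' = C.rotate a haC := ⟨_, rfl⟩
          have hcyc' : C'.IsCycle := hC' ▸ hcyc.rotate haC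
          have hrote : C'.edges ~r C.edges := hC' ▸ C.rotate_edges a haC
          have hrots : C'.support.tail ~r C.support.tail := hC' ▸ C.support_rotate a haC
          have hbC' : b ∈ C'.support := by
            rw [Walk.support_eq_cons]
            exact List.mem_cons_of_mem _ (hrots.mem_iff.mpr hbtail)
          have hspec : (C'.takeUntil b hbC').append (C'.dropUntil b hbC') = C' :=
            C'.take_spec hbC'
          set q1 := C'.takeUntil b hbC' with hq1
          set q2 := C'.dropUntil b hbC' with hq2
          have hCe : C'.edges = q1.edges ++ q2.edges := by
            rw [← hspec, Walk.edges_append]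
          have hCst : C'.support.tail = q1.support.tail ++ q2.support.tail := by
            rw [← hspec, Walk.tail_support_append]
          have hndt : (q1.support.tail ++ q2.support.tail).Nodup := by
            rw [← hCst]; exact hcyc'.support_nodup
          obtain ⟨hnd1t, hnd2t, -⟩ := List.nodup_append.mp hndt
          have hdisj := List.disjoint_of_nodup_append hndt
          have hq1nn : ¬ q1.Nil := Walk.not_nil_of_ne hadj.ne
          have hq2nn : ¬ q2.Nil := Walk.not_nil_of_ne hadj.ne'
          have ha2 : a ∈ q2.support.tail := end_mem_tail q2 hq2nn
          have hb1 : b ∈ q1.support.tail := end_mem_tail q1 hq1nn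
          have hnd1 : q1.support.Nodup := by
            rw [Walk.support_eq_cons]
            exact List.nodup_cons.mpr ⟨fun hmem => hdisj hmem ha2, hnd1t⟩
          have hnd2 : q2.support.Nodup := by
            rw [Walk.support_eq_cons]
            exact List.nodup_cons.mpr ⟨fun hmem => hdisj hb1 hmem, hnd2t⟩
          have hedgesnd : (q1.edges ++ q2.edges).Nodup := by
            rw [← hCe]; exact hcyc'.isCircuit.isTrail.edges_nodup
          obtain ⟨hend1, hend2, -⟩ := List.nodup_append.mp hedgesnd
          have hedisj := List.disjoint_of_nodup_append hedgesnd
          have hq1C : ∀ g ∈ q1.edges, g ∈ C.edges := fun g hg =>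
            hrote.mem_iff.mp (by rw [hCe]; exact List.mem_append_left _ hg)
          have hq2C : ∀ g ∈ q2.edges, g ∈ C.edges := fun g hg =>
            hrote.mem_iff.mp (by rw [hCe]; exact List.mem_append_right _ hg)
          have hfmC' : fm ∈ q1.edges ∨ fm ∈ q2.edges := by
            have h0 : fm ∈ C'.edges := hrote.mem_iff.mpr hfm
            rw [hCe] at h0
            exact List.mem_append.mp h0
          have hrevnd : q2.reverse.support.Nodup := by
            rw [Walk.support_reverse]; exact List.nodup_reverse.mpr hnd2
          have hrevmem : ∀ g, g ∈ q2.reverse.edges ↔ g ∈ q2.edges := by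
            intro g; rw [Walk.edges_reverse, List.mem_reverse]
          rcases hfmC' with hfm1 | hfm2
          · by_cases he1 : s(a, b) ∈ q1.edges
            · -- use the arc q2.reverse : all of its edges lie in Y
              have hq2e : ∀ g ∈ q2.reverse.edges, g ≠ s(a, b) := by
                intro g hg hcon
                exact hedisj (hcon ▸ he1) ((hrevmem g).mp hg)
              have hne : q2.reverse.edges ≠ [] := by
                intro h0
                have h1 : q2.reverse.length = 0 := by
                  rw [← Walk.length_edges, h0]; rfl
                rw [Walk.length_reverse] at h1
                exact hq2nn (Walk.nil_iff_length_eq.mpr h1)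
              obtain ⟨mA, hmA, hmAmax⟩ := exists_list_max hne
              have hsubA : ∀ g ∈ q2.reverse.edges, g ≠ mA → g ∈ Y := by
                intro g hg _
                have hgq2 := (hrevmem g).mp hg
                refine hgY g (hq2C g hgq2) ?_ (hq2e g hg)
                intro hcon
                exact hedisj (hcon ▸ hfm1) hgq2
              obtain ⟨Bc, hBc, hBcsub⟩ :=
                arc_contra hadj hYc q2.reverse hrevnd hq2e hmA hmAmax hsubA
              exact hYbc ⟨Bc, hBc, hBcsub⟩
            · -- use the arc q1 with maximal edge fm
              obtain ⟨Bc, hBc, hBcsub⟩ := arc_contra hadj hYc q1 hnd1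
                (fun g hg hcon => he1 (hcon ▸ hg)) hfm1 (fun g hg => hmax g (hq1C g hg))
                (fun g hg hgfm => hgY g (hq1C g hg) hgfm (fun hcon => he1 (hcon ▸ hg)))
              exact hYbc ⟨Bc, hBc, hBcsub⟩
          · by_cases he2 : s(a, b) ∈ q2.edges
            · -- use the arc q1 : all of its edges lie in Y
              have hq1e : ∀ g ∈ q1.edges, g ≠ s(a, b) := fun g hg hcon =>
                hedisj (hcon ▸ hg) he2
              have hne : q1.edges ≠ [] := by
                intro h0
                have h1 : q1.length = 0 := by
                  rw [← Walk.length_edges, h0]; rfl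
                exact hq1nn (Walk.nil_iff_length_eq.mpr h1)
              obtain ⟨mA, hmA, hmAmax⟩ := exists_list_max hne
              have hsubA : ∀ g ∈ q1.edges, g ≠ mA → g ∈ Y := by
                intro g hg _
                refine hgY g (hq1C g hg) ?_ (hq1e g hg)
                intro hcon
                exact hedisj hg (hcon ▸ hfm2)
              obtain ⟨Bc, hBc, hBcsub⟩ :=
                arc_contra hadj hYc q1 hnd1 hq1e hmA hmAmax hsubA
              exact hYbc ⟨Bc, hBc, hBcsub⟩
            · -- use the arc q2.reverse with maximal edge fm
              have hq2e : ∀ g ∈ q2.reverse.edges, g ≠ s(a, b) := fun g hg hcon =>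
                he2 (hcon ▸ (hrevmem g).mp hg)
              have hfmA : fm ∈ q2.reverse.edges := (hrevmem fm).mpr hfm2
              obtain ⟨Bc, hBc, hBcsub⟩ := arc_contra hadj hYc q2.reverse hrevnd hq2e hfmA
                (fun g hg => hmax g (hq2C g ((hrevmem g).mp hg)))
                (fun g hg hgfm => hgY g (hq2C g ((hrevmem g).mp hg)) hgfm (hq2e g hg))
              exact hYbc ⟨Bc, hBc, hBcsub⟩
        · -- not both a and b lie on the cycle
          obtain ⟨Bc, hBc, hBcsub⟩ :=
            cycle_avoid_contra hadj hYc C hcyc hboth hfm hmax hgY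
          exact hYbc ⟨Bc, hBc, hBcsub⟩
      · -- the image of insert s(a,b) Y is Y
        exact Finset.erase_insert heY
  refine ⟨?_, hbij⟩
  rw [← hbij.image_eq, Set.ncard_image_of_injOn hbij.injOn]
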